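/- Let E ∈ ℝ^{n×n}, F ∈ ℝ^{n×p}, G ∈ ℝ^{m×n}, H ∈ ℝ^{m×p}. Define 𝒯₁ = [G; G·E; ...; G·E^{n−1}] ∈ ℝ^{nm×n}, 𝒯₂ = [G·E^{n−1}·F, ..., G·F, H] ∈ ℝ^{m×(n+1)p}, and 𝓜 ∈ ℝ^{nm×(n+1)p} the block matrix whose (i,j) block (for i ∈ {0,...,n−1}, j ∈ {0,...,n}) equals H if j = i, equals G·E^{i−1−j}·F if j < i, and is zero otherwise. Assume 𝒯₁ᵀ·𝒯₁ is invertible and set 𝒯₁^† = (𝒯₁ᵀ·𝒯₁)⁻¹·𝒯₁ᵀ. Let y : ℕ → ℝ^p and x_c : ℕ → ℝ^n, u : ℕ → ℝ^m satisfy x_c(t+1) = E·x_c(t) + F·y(t) and u(t) = G·x_c(t) + H·y(t) for all t ≥ 0. Then for every t ≥ n, u(t) = G·E^n·𝒯₁^†·U(t−1) + (𝒯₂ − G·E^n·𝒯₁^†·𝓜)·Y(t), where U(t−1) = [u(t−n); ...; u(t−1)] and Y(t) = [y(t−n); ...; y(t)]. -/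

import Mathlib

/-!
Unrolling the compensator from the state `x_c(t-n)` writes the past outputs as
`U(t-1) = 𝒯₁ x_c(t-n) + 𝓜 Y(t)` and the current one as `u(t) = G Eⁿ x_c(t-n) + 𝒯₂ Y(t)`, where
`𝓜` and `𝒯₂` are block-Toeplitz in the impulse response `H, GF, GEF, GE²F, …`. As `𝒯₁†` is a left
inverse of `𝒯₁`, the state is recovered as `x_c(t-n) = 𝒯₁† (U(t-1) - 𝓜 Y(t))`; substituting it into
`u(t)` gives the static gain.
-/

open Matrix Finset

section BlockMatrix

variable {R ι α β κ : Type*}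

theorem of_prod_mulVec [NonUnitalNonAssocSemiring R] [Fintype κ] [Fintype β]
    (B : κ → Matrix α β R) (v : κ → β → R) :
    (of fun a (jb : κ × β) => B jb.1 a jb.2) *ᵥ (fun jb => v jb.1 jb.2) = ∑ j, B j *ᵥ v j := by
  ext a
  simp only [mulVec, dotProduct, of_apply, Fintype.sum_prod_type, Finset.sum_apply]

theorem of_blocks_mulVec [NonUnitalNonAssocSemiring R] [Fintype κ] [Fintype β]
    (B : ι → κ → Matrix α β R) (v : κ → β → R) :
    (of fun (ia : ι × α) (jb : κ × β) => B ia.1 jb.1 ia.2 jb.2) *ᵥ (fun jb => v jb.1 jb.2) =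
      fun ia => (∑ j, B ia.1 j *ᵥ v j) ia.2 := by
  ext ia
  exact congrFun (of_prod_mulVec (B ia.1) v) ia.2

theorem sum_fin_ite_le_mulVec [Semiring R] [Fintype β] (h : ℕ → Matrix α β R)
    (v : ℕ → β → R) {i N : ℕ} (hi : i ≤ N) :
    ∑ j : Fin (N + 1), (if (j : ℕ) ≤ i then h (i - j) else 0) *ᵥ v j =
      ∑ j ∈ range (i + 1), h (i - j) *ᵥ v j := by
  rw [Fin.sum_univ_eq_sum_range (fun j => (if j ≤ i then h (i - j) else 0) *ᵥ v j),
    ← sum_range_add_sum_Ico _ (by omega : i + 1 ≤ N + 1)]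
  have hzero : ∑ j ∈ Ico (i + 1) (N + 1), (if j ≤ i then h (i - j) else 0) *ᵥ v j = 0 :=
    sum_eq_zero fun j hj => by simp at hj; simp [show ¬ j ≤ i by omega]
  rw [hzero, add_zero]
  exact Finset.sum_congr rfl fun j hj => by simp at hj; simp [show j ≤ i by omega]

theorem eq_mulVec_add_sub_mulVec_of_mul_eq_one [Ring R] [Fintype ι] [DecidableEq ι]
    [Fintype κ] [Fintype β] {T : Matrix κ ι R} {L : Matrix ι κ R} (hLT : L * T = 1)
    (K : Matrix α ι R) (M : Matrix κ β R) (N : Matrix α β R) (x : ι → R) (Y : β → R) :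
    K *ᵥ x + N *ᵥ Y = (K * L) *ᵥ (T *ᵥ x + M *ᵥ Y) + (N - K * L * M) *ᵥ Y := by
  rw [mulVec_add, mulVec_mulVec, mulVec_mulVec, Matrix.mul_assoc K L T, hLT, Matrix.mul_one,
    sub_mulVec]
  abel

end BlockMatrix

/-- `U(t-1) = window u (t-n) n` and `Y(t) = window y (t-n) (n+1)`. -/
def window {R γ : Type*} (w : ℕ → γ → R) (s N : ℕ) : Fin N × γ → R :=
  fun ia => w (s + ia.1) ia.2

section LinearSystem

variable {R ι α β : Type*} [Semiring R] [Fintype ι] [DecidableEq ι]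

def impulseResponse (E : Matrix ι ι R) (F : Matrix ι β R) (G : Matrix α ι R)
    (H : Matrix α β R) : ℕ → Matrix α β R
  | 0 => H
  | k + 1 => G * E ^ k * F

variable {E : Matrix ι ι R} {F : Matrix ι β R} {G : Matrix α ι R} {H : Matrix α β R}

theorem impulseResponse_sub_of_lt {i j : ℕ} (hji : j < i) :
    impulseResponse E F G H (i - j) = G * E ^ (i - 1 - j) * F := by
  rw [show i - j = i - 1 - j + 1 by omega, impulseResponse]

variable [Fintype β] {x : ℕ → ι → R} {y : ℕ → β → R} {u : ℕ → α → R}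

theorem state_eq_pow_mulVec_add_sum (hx : ∀ t, x (t + 1) = E *ᵥ x t + F *ᵥ y t) (s k : ℕ) :
    x (s + k) = E ^ k *ᵥ x s + ∑ j ∈ range k, (E ^ (k - 1 - j) * F) *ᵥ y (s + j) := by
  induction k generalizing s with
  | zero => simp
  | succ k ih =>
    rw [show s + (k + 1) = s + 1 + k by omega, ih, hx, sum_range_succ', mulVec_add,
      mulVec_mulVec, mulVec_mulVec, ← pow_succ, add_assoc, add_comm ((E ^ k * F) *ᵥ y s)]
    congr 2
    refine Finset.sum_congr rfl fun j _ => ?_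
    rw [show k + 1 - 1 - (j + 1) = k - 1 - j by omega, show s + 1 + j = s + (j + 1) by omega]

theorem output_eq_pow_mulVec_add_sum (hx : ∀ t, x (t + 1) = E *ᵥ x t + F *ᵥ y t)
    (hu : ∀ t, u t = G *ᵥ x t + H *ᵥ y t) (s k : ℕ) :
    u (s + k) = (G * E ^ k) *ᵥ x s +
      ∑ j ∈ range (k + 1), impulseResponse E F G H (k - j) *ᵥ y (s + j) := by
  rw [hu, state_eq_pow_mulVec_add_sum hx, mulVec_add, mulVec_mulVec, mulVec_sum, sum_range_succ,
    Nat.sub_self, add_assoc]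
  congr 2
  refine Finset.sum_congr rfl fun j hj => ?_
  rw [impulseResponse_sub_of_lt (mem_range.mp hj), mulVec_mulVec, Matrix.mul_assoc]

theorem window_output_eq (hx : ∀ t, x (t + 1) = E *ᵥ x t + F *ᵥ y t)
    (hu : ∀ t, u t = G *ᵥ x t + H *ᵥ y t) (s N : ℕ) :
    window u s N =
      (of fun (ia : Fin N × α) b => (G * E ^ (ia.1 : ℕ)) ia.2 b) *ᵥ x s +
      (of fun (ia : Fin N × α) (jb : Fin (N + 1) × β) =>
        (if (jb.1 : ℕ) ≤ ia.1 then impulseResponse E F G H (ia.1 - jb.1) else 0) ia.2 jb.2) *ᵥ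
        window y s (N + 1) := by
  ext ⟨i, a⟩
  unfold window
  rw [Pi.add_apply, of_blocks_mulVec (fun (i : Fin N) (j : Fin (N + 1)) =>
      if (j : ℕ) ≤ i then impulseResponse E F G H (i - j) else 0) (fun j => y (s + j))]
  dsimp only
  rw [sum_fin_ite_le_mulVec _ (fun j => y (s + j)) i.is_lt.le, output_eq_pow_mulVec_add_sum hx hu]
  rfl

theorem output_eq_mulVec_add_mulVec_window (hx : ∀ t, x (t + 1) = E *ᵥ x t + F *ᵥ y t)
    (hu : ∀ t, u t = G *ᵥ x t + H *ᵥ y t) (s N : ℕ) :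
    u (s + N) = (G * E ^ N) *ᵥ x s +
      (of fun a (jb : Fin (N + 1) × β) => impulseResponse E F G H (N - jb.1) a jb.2) *ᵥ
        window y s (N + 1) := by
  unfold window
  rw [of_prod_mulVec (fun j : Fin (N + 1) => impulseResponse E F G H (N - j)) (fun j => y (s + j)),
    Fin.sum_univ_eq_sum_range (fun j => impulseResponse E F G H (N - j) *ᵥ y (s + j)),
    output_eq_pow_mulVec_add_sum hx hu]

end LinearSystem

/-- **From dynamic to static controllers.**
With `𝒯₁ = [G; GE; …; GE^{n-1}]`, `𝒯₂ = [GE^{n-1}F, …, GF, H]`, `𝓜` the block matrix with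
`(i,j)` block `H` if `j = i`, `G E^{i-1-j} F` if `j < i`, zero otherwise, and
`𝒯₁† = (𝒯₁ᵀ𝒯₁)⁻¹𝒯₁ᵀ`, every output of the dynamic compensator satisfies, for `t ≥ n`,
`u(t) = G Eⁿ 𝒯₁† U(t-1) + (𝒯₂ - G Eⁿ 𝒯₁† 𝓜) Y(t)`. -/
theorem dynamic_to_static_controller {n p m : ℕ}
    (E : Matrix (Fin n) (Fin n) ℝ) (F : Matrix (Fin n) (Fin p) ℝ)
    (G : Matrix (Fin m) (Fin n) ℝ) (H : Matrix (Fin m) (Fin p) ℝ)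
    -- 𝒯₁ = [G; GE; …; GE^{n-1}]
    (T₁ : Matrix (Fin n × Fin m) (Fin n) ℝ)
    (hT₁ : T₁ = Matrix.of fun ia b => (G * E ^ (ia.1 : ℕ)) ia.2 b)
    -- 𝒯₂ = [GE^{n-1}F, …, GF, H]
    (T₂ : Matrix (Fin m) (Fin (n + 1) × Fin p) ℝ)
    (hT₂ : T₂ = Matrix.of fun a jb =>
      if (jb.1 : ℕ) = n then H a jb.2 else (G * E ^ (n - 1 - (jb.1 : ℕ)) * F) a jb.2)
    -- 𝓜 : (i,j) block is H if j = i, G E^{i-1-j} F if j < i, zero otherwise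
    (Mc : Matrix (Fin n × Fin m) (Fin (n + 1) × Fin p) ℝ)
    (hMc : Mc = Matrix.of fun ia jb =>
      if (jb.1 : ℕ) = (ia.1 : ℕ) then H ia.2 jb.2
      else if (jb.1 : ℕ) < (ia.1 : ℕ) then (G * E ^ ((ia.1 : ℕ) - 1 - (jb.1 : ℕ)) * F) ia.2 jb.2
      else 0)
    -- 𝒯₁ᵀ𝒯₁ invertible, 𝒯₁† = (𝒯₁ᵀ𝒯₁)⁻¹𝒯₁ᵀ
    (hinv : IsUnit (T₁ᵀ * T₁).det)
    (T₁dag : Matrix (Fin n) (Fin n × Fin m) ℝ)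
    (hT₁dag : T₁dag = (T₁ᵀ * T₁)⁻¹ * T₁ᵀ)
    (y : ℕ → Fin p → ℝ) (xc : ℕ → Fin n → ℝ) (u : ℕ → Fin m → ℝ)
    (hxc : ∀ t, xc (t + 1) = E.mulVec (xc t) + F.mulVec (y t))
    (hu : ∀ t, u t = G.mulVec (xc t) + H.mulVec (y t)) :
    ∀ t, n ≤ t →
      u t = (G * E ^ n * T₁dag).mulVec (fun ib : Fin n × Fin m => u (t - n + (ib.1 : ℕ)) ib.2)
        + (T₂ - G * E ^ n * T₁dag * Mc).mulVec
            (fun jb : Fin (n + 1) × Fin p => y (t - n + (jb.1 : ℕ)) jb.2) := by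
  intro t ht
  obtain ⟨s, rfl⟩ := Nat.exists_eq_add_of_le' ht
  have hleft : T₁dag * T₁ = 1 := by rw [hT₁dag, Matrix.mul_assoc, nonsing_inv_mul _ hinv]
  have hT₂' : T₂ = of fun a jb => impulseResponse E F G H (n - jb.1) a jb.2 := by
    ext a ⟨j, b⟩
    rw [hT₂, of_apply, of_apply]
    split_ifs with hj
    · rw [hj, Nat.sub_self]; rfl
    · rw [impulseResponse_sub_of_lt (by omega)]
  have hMc' : Mc = of fun ia jb =>
      (if (jb.1 : ℕ) ≤ ia.1 then impulseResponse E F G H (ia.1 - jb.1) else 0) ia.2 jb.2 := by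
    ext ⟨i, a⟩ ⟨j, b⟩
    rw [hMc, of_apply, of_apply]
    split_ifs with heq _ hlt <;> try omega
    · rw [heq, Nat.sub_self]; rfl
    · rw [impulseResponse_sub_of_lt hlt]
    · rfl
  rw [Nat.add_sub_cancel]
  calc u (s + n) = (G * E ^ n) *ᵥ xc s + T₂ *ᵥ window y s (n + 1) := by
        rw [hT₂']; exact output_eq_mulVec_add_mulVec_window hxc hu s n
    _ = (G * E ^ n * T₁dag) *ᵥ (T₁ *ᵥ xc s + Mc *ᵥ window y s (n + 1)) +
          (T₂ - G * E ^ n * T₁dag * Mc) *ᵥ window y s (n + 1) :=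
        eq_mulVec_add_sub_mulVec_of_mul_eq_one hleft _ _ _ _ _
    _ = _ := by rw [hT₁, hMc', ← window_output_eq hxc hu]; rfl
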